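/- arXiv:1608.03749 — 6 statements merged into one kernel-verified Lean document; each statement's English description precedes it below -/
import Mathlib

section
/- Let K ≥ 1 and let R_1, …, R_K be independent nonnegative real-valued random variables with P(R_j > r) = exp(−π a_j r²) for all r ≥ 0, where a_j > 0 for each j. Fix an index k and constants β_j > 0 with β_k = 1. Then the probability of the event {R_j > β_j R_k for all j ≠ k} equals a_k / (Σ_{j=1}^K a_j β_j²). -/
open MeasureTheory ProbabilityTheory Real
open Set Filter Topology

lemma tail_Ici (ν : Measure ℝ) [IsProbabilityMeasure ν] (a : ℝ)
    (h : ∀ r : ℝ, 0 ≤ r → ν (Set.Ioi r) = ENNReal.ofReal (Real.exp (-(π * a * r ^ 2)))) :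
    ∀ r : ℝ, 0 ≤ r → ν (Set.Ici r) = ENNReal.ofReal (Real.exp (-(π * a * r ^ 2))) := by
  intro r hr
  rcases eq_or_lt_of_le hr with h0 | h0
  · subst h0
    refine le_antisymm ?_ ?_
    · have : ENNReal.ofReal (Real.exp (-(π * a * (0:ℝ) ^ 2))) = 1 := by
        norm_num
      rw [this]; exact prob_le_one
    · have := h 0 le_rfl
      calc ENNReal.ofReal (Real.exp (-(π * a * (0:ℝ) ^ 2))) = ν (Ioi 0) := this.symm
        _ ≤ ν (Ici 0) := measure_mono Ioi_subset_Ici_self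
  · -- r > 0
    set s : ℕ → Set ℝ := fun n => Ioi (max 0 (r - 1 / (n + 1))) with hs
    have hiInter : ⋂ n, s n = Ici r := by
      ext x
      simp only [hs, mem_iInter, mem_Ioi, mem_Ici]
      constructor
      · intro hx
        by_contra hxr
        push_neg at hxr
        obtain ⟨n, hn⟩ := exists_nat_one_div_lt (sub_pos.mpr hxr)
        have h2 := hx n
        have h3 : r - 1 / (n + 1 : ℝ) ≤ max 0 (r - 1 / (n + 1 : ℝ)) := le_max_right _ _
        linarith
      · intro hx n
        have h1 : (0:ℝ) < 1 / (n + 1) := by positivity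
        have h2 : max 0 (r - 1 / (n + 1:ℝ)) < r := max_lt h0 (by linarith)
        linarith
    have hanti : Antitone s := by
      intro m n hmn
      apply Ioi_subset_Ioi
      apply max_le_max le_rfl
      have : (1:ℝ) / (n + 1) ≤ 1 / (m + 1) := by
        apply one_div_le_one_div_of_le (by positivity)
        exact_mod_cast by omega
      linarith
    have htend := tendsto_measure_iInter_atTop (μ := ν) (s := s)
      (fun n => measurableSet_Ioi.nullMeasurableSet)
      hanti ⟨0, measure_ne_top ν _⟩
    rw [hiInter] at htend
    have hval : ∀ n : ℕ, (ν ∘ s) n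
        = ENNReal.ofReal (Real.exp (-(π * a * (max 0 (r - 1/(n+1:ℝ))) ^ 2))) := by
      intro n; exact h _ (le_max_left _ _)
    have htend2 : Tendsto (ν ∘ s) atTop
        (𝓝 (ENNReal.ofReal (Real.exp (-(π * a * r ^ 2))))) := by
      have hseq : Tendsto (fun n : ℕ => max 0 (r - 1/(n+1:ℝ))) atTop (𝓝 r) := by
        have : Tendsto (fun n : ℕ => r - 1/(n+1:ℝ)) atTop (𝓝 (r - 0)) :=
          tendsto_const_nhds.sub tendsto_one_div_add_atTop_nhds_zero_nat
        rw [sub_zero] at this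
        have := (tendsto_const_nhds (x := (0:ℝ))).max this
        rwa [max_eq_right h0.le] at this
      have hcont : Continuous fun x : ℝ => ENNReal.ofReal (Real.exp (-(π * a * x ^ 2))) := by
        exact ENNReal.continuous_ofReal.comp (Real.continuous_exp.comp (by continuity))
      have htc := (hcont.tendsto r).comp hseq
      have : (ν ∘ s) = fun n : ℕ =>
          (fun x : ℝ => ENNReal.ofReal (Real.exp (-(π * a * x ^ 2))))
            (max 0 (r - 1/(n+1:ℝ))) := by
        funext n; exact hval n
      rw [this]
      exact htc
    exact tendsto_nhds_unique htend htend2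

lemma lintegral_exp_tail (ν : Measure ℝ) [IsProbabilityMeasure ν] (a S : ℝ)
    (ha : 0 < a) (hS : 0 < S)
    (h : ∀ r : ℝ, 0 ≤ r → ν (Set.Ioi r) = ENNReal.ofReal (Real.exp (-(π * a * r ^ 2)))) :
    ∫⁻ x, ENNReal.ofReal (Real.exp (-(π * S * x ^ 2))) ∂ν = ENNReal.ofReal (a / (a + S)) := by
  have hIic : ν (Iic 0) = 0 := by
    have h1 : ν (Ioi (0:ℝ)) = 1 := by
      rw [h 0 le_rfl]; norm_num
    have h2 := measure_compl (measurableSet_Ioi (a := (0:ℝ))) (measure_ne_top ν _)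
    rw [compl_Ioi, h1, measure_univ] at h2
    simpa using h2
  have hIci := tail_Ici ν a h
  set p : ℝ := a / S with hp
  have hp0 : 0 < p := div_pos ha hS
  -- Step 1: layer cake
  have hmble : AEMeasurable (fun x : ℝ => Real.exp (-(π * S * x ^ 2))) ν :=
    (Real.continuous_exp.comp (by continuity)).aemeasurable
  rw [lintegral_eq_lintegral_meas_lt ν (ae_of_all _ fun x => (Real.exp_pos _).le) hmble]
  -- Step 2: compute the measure of superlevel sets
  have hlevel : ∀ t : ℝ, 0 < t →
      ν {x | t < Real.exp (-(π * S * x ^ 2))} = ENNReal.ofReal (1 - t ^ p) := by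
    intro t ht
    rcases le_or_gt 1 t with ht1 | ht1
    · have hempty : {x : ℝ | t < Real.exp (-(π * S * x ^ 2))} = ∅ := by
        ext x
        simp only [mem_setOf_eq, mem_empty_iff_false, iff_false, not_lt]
        calc Real.exp (-(π * S * x ^ 2)) ≤ 1 := by
              rw [Real.exp_le_one_iff]
              have : (0:ℝ) ≤ π * S * x ^ 2 := by positivity
              linarith
          _ ≤ t := ht1
      rw [hempty, measure_empty]
      symm
      rw [ENNReal.ofReal_eq_zero]
      have : (1:ℝ) ≤ t ^ p := Real.one_le_rpow ht1 hp0.le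
      linarith
    · -- 0 < t < 1
      set u : ℝ := Real.sqrt (-Real.log t / (π * S)) with hu
      have hlogt : Real.log t < 0 := Real.log_neg ht ht1
      have hc : 0 < -Real.log t / (π * S) := div_pos (by linarith) (by positivity)
      have hu0 : 0 < u := Real.sqrt_pos.mpr hc
      have husq : u ^ 2 = -Real.log t / (π * S) := Real.sq_sqrt hc.le
      have hset : {x : ℝ | t < Real.exp (-(π * S * x ^ 2))} = Ioo (-u) u := by
        ext x
        simp only [mem_setOf_eq, mem_Ioo]
        rw [← Real.log_lt_iff_lt_exp ht]
        constructor
        · intro hx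
          have hx2 : x ^ 2 < u ^ 2 := by
            rw [husq, lt_div_iff₀ (by positivity)]
            nlinarith
          exact abs_lt_of_sq_lt_sq' hx2 hu0.le
        · intro hx
          have hx2 : x ^ 2 < u ^ 2 := sq_lt_sq' hx.1 hx.2
          rw [husq, lt_div_iff₀ (by positivity)] at hx2
          nlinarith
      rw [hset]
      -- ν (Ioo (-u) u) = ν (Ioo 0 u)
      have hinter : ν (Ioo (-u) u) = ν (Ioo 0 u) := by
        have hsub : Ioo (-u) u ⊆ Ioo 0 u ∪ Iic 0 := by
          intro x hx
          rcases le_or_gt x 0 with hx0 | hx0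
          · exact Or.inr hx0
          · exact Or.inl ⟨hx0, hx.2⟩
        refine le_antisymm ?_ (measure_mono (Ioo_subset_Ioo (by linarith) le_rfl))
        calc ν (Ioo (-u) u) ≤ ν (Ioo 0 u ∪ Iic 0) := measure_mono hsub
          _ ≤ ν (Ioo 0 u) + ν (Iic 0) := measure_union_le _ _
          _ = ν (Ioo 0 u) := by rw [hIic, add_zero]
      rw [hinter]
      -- ν (Ioo 0 u) = ν (Ioi 0) - ν (Ici u)
      have hsplit : ν (Ioo 0 u) + ν (Ici u) = ν (Ioi 0) := by
        rw [← measure_union ((Iio_disjoint_Ici le_rfl).mono_left Ioo_subset_Iio_self) measurableSet_Ici,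
          Ioo_union_Ici_eq_Ioi hu0]
      rw [h 0 le_rfl] at hsplit
      rw [hIci u hu0.le] at hsplit
      have hexpu : Real.exp (-(π * a * u ^ 2)) = t ^ p := by
        rw [husq]
        rw [Real.rpow_def_of_pos ht]
        congr 1
        field_simp [hp]
        rw [hp]; field_simp
      rw [hexpu] at hsplit
      have htp1 : t ^ p ≤ 1 := Real.rpow_le_one ht.le ht1.le hp0.le
      have htp0 : 0 ≤ t ^ p := Real.rpow_nonneg ht.le _
      have : ENNReal.ofReal (Real.exp (-(π * a * (0:ℝ) ^ 2))) = 1 := by norm_num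
      rw [this] at hsplit
      have : ν (Ioo 0 u) = 1 - ENNReal.ofReal (t ^ p) :=
        ENNReal.eq_sub_of_add_eq (by simp) hsplit
      rw [this, ← ENNReal.ofReal_one, ← ENNReal.ofReal_sub _ htp0]
  -- Step 3: integrate
  have hcongr : ∫⁻ t in Ioi (0:ℝ), ν {x | t < Real.exp (-(π * S * x ^ 2))}
      = ∫⁻ t in Ioi (0:ℝ), ENNReal.ofReal (1 - t ^ p) := by
    apply setLIntegral_congr_fun measurableSet_Ioi
    exact fun t ht => hlevel t ht
  rw [hcongr]
  have hintegrable : IntegrableOn (fun t : ℝ => 1 - t ^ p) (Ioo 0 1) volume := by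
    have h1 : IntervalIntegrable (fun t : ℝ => t ^ p) volume 0 1 :=
      intervalIntegral.intervalIntegrable_rpow' (by linarith)
    have h2 : IntervalIntegrable (fun t : ℝ => 1 - t ^ p) volume 0 1 :=
      (intervalIntegrable_const (c := (1:ℝ))).sub h1
    have := (intervalIntegrable_iff_integrableOn_Ioo_of_le zero_le_one).mp h2
    exact this
  have hsplit : (Ioi (0:ℝ)) = Ioo 0 1 ∪ Ici 1 := (Ioo_union_Ici_eq_Ioi zero_lt_one).symm
  rw [hsplit, lintegral_union measurableSet_Ici
    ((Iio_disjoint_Ici le_rfl).mono_left Ioo_subset_Iio_self)]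
  have hzero : ∫⁻ t in Ici (1:ℝ), ENNReal.ofReal (1 - t ^ p) = 0 := by
    have heq : ∫⁻ t in Ici (1:ℝ), ENNReal.ofReal (1 - t ^ p)
        = ∫⁻ _t in Ici (1:ℝ), (0:ENNReal) :=
      setLIntegral_congr_fun measurableSet_Ici (fun t ht => by
        rw [ENNReal.ofReal_eq_zero]
        have : (1:ℝ) ≤ t ^ p := Real.one_le_rpow ht hp0.le
        linarith)
    rw [heq, lintegral_zero]
  rw [hzero, add_zero]
  rw [← ofReal_integral_eq_lintegral_ofReal hintegrable]
  · congr 1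
    rw [← integral_Ioc_eq_integral_Ioo, ← intervalIntegral.integral_of_le zero_le_one]
    have h1 : IntervalIntegrable (fun t : ℝ => t ^ p) volume 0 1 :=
      intervalIntegral.intervalIntegrable_rpow' (by linarith)
    rw [intervalIntegral.integral_sub intervalIntegrable_const h1]
    rw [integral_rpow (Or.inl (by linarith))]
    rw [Real.one_rpow, Real.zero_rpow (by linarith)]
    simp only [intervalIntegral.integral_const, smul_eq_mul, mul_one, sub_zero]
    rw [hp]
    field_simp
    ring
  · rw [EventuallyLE, ae_restrict_iff' measurableSet_Ioo]
    apply ae_of_all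
    intro t ht
    simp only [Pi.zero_apply]
    have : t ^ p ≤ 1 := Real.rpow_le_one ht.1.le ht.2.le hp0.le
    linarith

/-- Tier association probability: if `R j` are independent nonnegative random variables
with tail `μ(R j > r) = exp(−π a_j r²)` and `β j > 0` with `β k = 1`, then the
probability that `R j > β j * R k` for all `j ≠ k` equals `a k / ∑ j, a j * (β j)²`. -/
theorem tier_association_probability
    {Ω : Type*} [MeasurableSpace Ω] (μ : Measure Ω) [IsProbabilityMeasure μ]
    (K : ℕ) (hK : 1 ≤ K) (R : Fin K → Ω → ℝ) (a β : Fin K → ℝ) (k : Fin K)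
    (hmeas : ∀ j, Measurable (R j))
    (hnonneg : ∀ j ω, 0 ≤ R j ω)
    (ha : ∀ j, 0 < a j) (hβ : ∀ j, 0 < β j) (hβk : β k = 1)
    (hindep : iIndepFun R μ)
    (htail : ∀ j, ∀ r : ℝ, 0 ≤ r →
      μ {ω | r < R j ω} = ENNReal.ofReal (Real.exp (-(π * a j * r ^ 2)))) :
    μ {ω | ∀ j, j ≠ k → β j * R k ω < R j ω}
      = ENNReal.ofReal (a k / ∑ j, a j * β j ^ 2) := by
  classical
  set T : Finset (Fin K) := Finset.univ.erase k with hT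
  have hmemT : ∀ j, j ∈ T ↔ j ≠ k := by
    intro j; simp [hT]
  rcases T.eq_empty_or_nonempty with hTe | hTne
  · -- K = 1 case: every index equals k
    have hall : ∀ j : Fin K, j = k := by
      intro j
      by_contra hj
      exact (Finset.notMem_empty j) (hTe ▸ (hmemT j).mpr hj)
    have hset : {ω : Ω | ∀ j, j ≠ k → β j * R k ω < R j ω} = Set.univ := by
      ext ω; simp only [mem_setOf_eq, mem_univ, iff_true]
      intro j hj; exact absurd (hall j) hj
    have hsum : ∑ j, a j * β j ^ 2 = a k := by
      rw [Finset.sum_eq_single_of_mem k (Finset.mem_univ k)]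
      · rw [hβk]; ring
      · intro b _ hb; exact absurd (hall b) hb
    rw [hset, hsum, measure_univ, div_self (ha k).ne', ENNReal.ofReal_one]
  · -- main case
    set S : ℝ := ∑ j ∈ T, a j * β j ^ 2 with hS
    have hS0 : 0 < S := Finset.sum_pos (fun j _ => mul_pos (ha j) (pow_pos (hβ j) 2)) hTne
    set Y : Ω → ({x // x ∈ T} → ℝ) := fun ω j => R j ω with hY
    have hYmeas : Measurable Y := measurable_pi_lambda _ fun j => hmeas j
    have hIndep : IndepFun (R k) Y μ := by
      have hd : Disjoint ({k} : Finset (Fin K)) T := by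
        simp [hT, Finset.disjoint_left]
      have h1 := hindep.indepFun_finset {k} T hd hmeas
      have h2 := h1.comp (measurable_pi_apply
        (⟨k, Finset.mem_singleton_self k⟩ : {x // x ∈ ({k} : Finset (Fin K))})) measurable_id
      exact h2
    set B : Set (ℝ × ({x // x ∈ T} → ℝ)) := {p | ∀ j : {x // x ∈ T}, β j * p.1 < p.2 j} with hB
    have hBm : MeasurableSet B := by
      have : B = ⋂ j : {x // x ∈ T}, {p : ℝ × ({x // x ∈ T} → ℝ) | β j * p.1 < p.2 j} := by
        ext p; simp [hB]
      rw [this]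
      exact MeasurableSet.iInter fun j =>
        measurableSet_lt (measurable_const.mul measurable_fst)
          ((measurable_pi_apply j).comp measurable_snd)
    have hE : {ω : Ω | ∀ j, j ≠ k → β j * R k ω < R j ω}
        = (fun ω => (R k ω, Y ω)) ⁻¹' B := by
      ext ω
      simp only [mem_setOf_eq, mem_preimage, hB, hY]
      constructor
      · intro h j; exact h j ((hmemT j).mp j.2)
      · intro h j hj; exact h ⟨j, (hmemT j).mpr hj⟩
    rw [hE, ← Measure.map_apply ((hmeas k).prodMk hYmeas) hBm,
      (indepFun_iff_map_prod_eq_prod_map_map (hmeas k).aemeasurable hYmeas.aemeasurable).mp hIndep,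
      Measure.prod_apply hBm]
    have hXprob : IsProbabilityMeasure (μ.map (R k)) :=
      Measure.isProbabilityMeasure_map (hmeas k).aemeasurable
    have htailX : ∀ r : ℝ, 0 ≤ r →
        (μ.map (R k)) (Set.Ioi r) = ENNReal.ofReal (Real.exp (-(π * a k * r ^ 2))) := by
      intro r hr
      rw [Measure.map_apply (hmeas k) measurableSet_Ioi]
      exact htail k r hr
    -- a.e. x ≥ 0 w.r.t. μ.map (R k)
    have hae : ∀ᵐ x ∂(μ.map (R k)), 0 ≤ x := by
      rw [ae_iff]
      have : {x : ℝ | ¬ 0 ≤ x} = Set.Iio 0 := by ext x; simp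
      rw [this]
      have h1 : (μ.map (R k)) (Set.Iio 0) ≤ (μ.map (R k)) (Set.Iic 0) :=
        measure_mono Iio_subset_Iic_self
      have h2 : (μ.map (R k)) (Set.Iic 0) = 0 := by
        have h3 := measure_compl (measurableSet_Ioi (a := (0:ℝ))) (measure_ne_top (μ.map (R k)) _)
        rw [compl_Ioi, htailX 0 le_rfl, measure_univ] at h3
        simpa using h3
      exact le_antisymm (h2 ▸ h1) zero_le
    have hinner : ∀ x : ℝ, 0 ≤ x →
        (μ.map Y) (Prod.mk x ⁻¹' B) = ENNReal.ofReal (Real.exp (-(π * S * x ^ 2))) := by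
      intro x hx
      rw [Measure.map_apply hYmeas (hBm.preimage measurable_prodMk_left)]
      have hYpre : Y ⁻¹' (Prod.mk x ⁻¹' B) = ⋂ j ∈ T, R j ⁻¹' Set.Ioi (β j * x) := by
        ext ω
        simp only [mem_preimage, hB, hY, mem_setOf_eq, mem_iInter, mem_Ioi]
        constructor
        · intro h j hj; exact h ⟨j, hj⟩
        · intro h j; exact h j j.2
      rw [hYpre]
      rw [hindep.measure_inter_preimage_eq_mul T
        (sets := fun j => Set.Ioi (β j * x)) (fun i _ => measurableSet_Ioi)]
      have hfac : ∀ j ∈ T, μ (R j ⁻¹' Set.Ioi (β j * x))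
          = ENNReal.ofReal (Real.exp (-(π * (a j * β j ^ 2) * x ^ 2))) := by
        intro j _
        have : R j ⁻¹' Set.Ioi (β j * x) = {ω | β j * x < R j ω} := rfl
        rw [this, htail j (β j * x) (mul_nonneg (hβ j).le hx)]
        congr 2
        ring
      rw [Finset.prod_congr rfl hfac, ← ENNReal.ofReal_prod_of_nonneg
        (fun j _ => (Real.exp_pos _).le), ← Real.exp_sum]
      congr 2
      calc ∑ j ∈ T, -(π * (a j * β j ^ 2) * x ^ 2)
          = ∑ j ∈ T, (a j * β j ^ 2) * (-(π * x ^ 2)) :=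
            Finset.sum_congr rfl (fun j _ => by ring)
        _ = S * (-(π * x ^ 2)) := by rw [← Finset.sum_mul]
        _ = -(π * S * x ^ 2) := by ring
    calc ∫⁻ x, (μ.map Y) (Prod.mk x ⁻¹' B) ∂(μ.map (R k))
        = ∫⁻ x, ENNReal.ofReal (Real.exp (-(π * S * x ^ 2))) ∂(μ.map (R k)) := by
          apply lintegral_congr_ae
          filter_upwards [hae] with x hx
          exact hinner x hx
      _ = ENNReal.ofReal (a k / (a k + S)) :=
          lintegral_exp_tail _ (a k) S (ha k) hS0 htailX
      _ = ENNReal.ofReal (a k / ∑ j, a j * β j ^ 2) := by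
          congr 1
          rw [← Finset.add_sum_erase _ _ (Finset.mem_univ k), hβk]
          ring_nf
          rw [hS, hT]
end

section
/- Let N ≥ 1, let p_f > 0 for f = 1, …, N, let c > 0, let N_c be a real number with 0 < N_c ≤ N, and let μ > 0. Define q*_f = min(1, max(0, √(c p_f / μ) − c)) for each f, and suppose Σ_{f=1}^N q*_f = N_c. Then q* is a global maximizer of F(q) = Σ_{f=1}^N p_f q_f / (c + q_f) over the feasible set Q = {q ∈ ℝ^N : 0 ≤ q_f ≤ 1 for all f, and Σ_{f=1}^N q_f ≤ N_c}. -/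
open Finset

private lemma key_coord (a c μ q s : ℝ) (ha : 0 < a) (hc : 0 < c) (hμ : 0 < μ)
    (hq0 : 0 ≤ q) (hq1 : q ≤ 1)
    (hs : s = min 1 (max 0 (Real.sqrt (c * a / μ) - c))) :
    a * q / (c + q) ≤ a * s / (c + s) + μ * (q - s) := by
  set t := Real.sqrt (c * a / μ) with ht
  have ht0 : 0 ≤ t := Real.sqrt_nonneg _
  have ht2 : t ^ 2 = c * a / μ := Real.sq_sqrt (by positivity)
  have hac : a * c = μ * t ^ 2 := by rw [ht2]; field_simp
  have hs0 : 0 ≤ s := by rw [hs]; simp [le_min_iff, le_max_iff]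
  have hs1 : s ≤ 1 := by rw [hs]; exact min_le_left _ _
  have hcq : (0:ℝ) < c + q := by linarith
  have hcs : (0:ℝ) < c + s := by linarith
  -- reduce to polynomial inequality
  have hpoly : a * c * (q - s) ≤ μ * (q - s) * (c + q) * (c + s) := by
    rcases le_or_gt (t - c) 0 with h1 | h1
    · -- s = 0, a*c ≤ μ*c^2
      have hs' : s = 0 := by rw [hs]; simp [max_eq_left h1, min_eq_right hc.le]
      have h2 : a * c ≤ μ * c ^ 2 := by
        rw [hac]
        nlinarith [mul_nonneg (show (0:ℝ) ≤ c - t by linarith) (show (0:ℝ) ≤ c + t by linarith)]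
      subst hs'
      nlinarith [mul_le_mul_of_nonneg_right h2 hq0,
        mul_nonneg (mul_nonneg (mul_nonneg hμ.le hq0) hc.le) hq0]
    rcases le_or_gt 1 (t - c) with h2 | h2
    · -- s = 1, a*c ≥ μ*(c+1)^2
      have hs' : s = 1 := by
        rw [hs]; rw [max_eq_right (by linarith)]; exact min_eq_left h2
      have h3 : μ * (c + 1) ^ 2 ≤ a * c := by
        rw [hac]
        nlinarith [mul_nonneg (show (0:ℝ) ≤ t - (c+1) by linarith) (show (0:ℝ) ≤ t + (c+1) by linarith)]
      subst hs'
      nlinarith [mul_le_mul_of_nonneg_right h3 (show (0:ℝ) ≤ 1 - q by linarith),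
        mul_nonneg (mul_nonneg (mul_nonneg hμ.le (show (0:ℝ) ≤ 1 - q by linarith))
          (show (0:ℝ) ≤ c + 1 by linarith)) (show (0:ℝ) ≤ 1 - q by linarith)]
    · -- interior: c + s = t
      have hs' : s = t - c := by
        rw [hs, max_eq_right h1.le, min_eq_right h2.le]
      have hct : c + s = t := by rw [hs']; ring
      have : a * c = μ * (c + s) ^ 2 := by rw [hct]; exact hac
      nlinarith [sq_nonneg (q - s), mul_nonneg hμ.le hcs.le]
  have heq : a * q / (c + q) - a * s / (c + s) = a * c * (q - s) / ((c + q) * (c + s)) := by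
    field_simp; ring
  have h4 : a * c * (q - s) / ((c + q) * (c + s)) ≤ μ * (q - s) := by
    rw [div_le_iff₀ (by positivity)]
    nlinarith
  linarith [heq, h4]

/-- Closed-form optimal caching probability (equation (12)): the truncated water-filling
vector `q*_f = [√(c p_f / μ) − c]₀¹` with `∑ f, q*_f = N_c` globally maximizes
`F(q) = ∑ f, p_f q_f / (c + q_f)` over the feasible set. -/
theorem optimal_caching_assoc_prob
    (N : ℕ) (hN : 1 ≤ N) (p : Fin N → ℝ) (hp : ∀ f, 0 < p f)
    (c : ℝ) (hc : 0 < c) (Nc : ℝ) (hNc0 : 0 < Nc) (hNcN : Nc ≤ N)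
    (μ : ℝ) (hμ : 0 < μ)
    (qstar : Fin N → ℝ)
    (hqstar : ∀ f, qstar f = min 1 (max 0 (Real.sqrt (c * p f / μ) - c)))
    (hsum : ∑ f, qstar f = Nc) :
    ∀ q : Fin N → ℝ, (∀ f, 0 ≤ q f ∧ q f ≤ 1) → (∑ f, q f ≤ Nc) →
      ∑ f, p f * q f / (c + q f) ≤ ∑ f, p f * qstar f / (c + qstar f) := by
  intro q hq hqsum
  have step : ∑ f, p f * q f / (c + q f)
      ≤ ∑ f, (p f * qstar f / (c + qstar f) + μ * (q f - qstar f)) := by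
    apply Finset.sum_le_sum
    intro f _
    exact key_coord (p f) c μ (q f) (qstar f) (hp f) hc hμ (hq f).1 (hq f).2 (hqstar f)
  rw [Finset.sum_add_distrib, ← Finset.mul_sum, Finset.sum_sub_distrib] at step
  have : μ * (∑ f, q f - ∑ f, qstar f) ≤ 0 := by
    apply mul_nonpos_of_nonneg_of_nonpos hμ.le
    linarith [hsum ▸ hqsum]
  linarith
end

section
/- Let N ≥ 1, let p_f > 0 for f = 1, …, N, let a > 0, b > 0, let N_c be a real number with 0 < N_c ≤ N, and let ν > 0. Define q*_f = min(1, max(0, (√(a p_f / ν))/b − a/b)) for each f, and suppose Σ_{f=1}^N q*_f = N_c. Then q* is a global maximizer of F(q) = Σ_{f=1}^N p_f q_f / (a + b q_f) over the feasible set Q = {q ∈ ℝ^N : 0 ≤ q_f ≤ 1 for all f, and Σ_{f=1}^N q_f ≤ N_c}. -/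
open Finset

lemma key_ineq (p a b ν q qs : ℝ) (hp : 0 < p) (ha : 0 < a) (hb : 0 < b) (hν : 0 < ν)
    (hqs : qs = min 1 (max 0 (Real.sqrt (a * p / ν) / b - a / b)))
    (hq0 : 0 ≤ q) (hq1 : q ≤ 1) :
    p * q / (a + b * q) ≤ p * qs / (a + b * qs) + ν * (q - qs) := by
  set s := Real.sqrt (a * p / ν) with hs
  have hs0 : 0 ≤ s := Real.sqrt_nonneg _
  have hs2 : s ^ 2 = a * p / ν := by
    rw [hs, Real.sq_sqrt]; positivity
  have hνs2 : ν * s ^ 2 = a * p := by rw [hs2]; field_simp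
  have hDq : 0 < a + b * q := by nlinarith
  rcases le_or_gt (s / b - a / b) 0 with h0 | h0
  · -- qs = 0
    have hqs0 : qs = 0 := by
      rw [hqs, max_eq_left h0, min_eq_right zero_le_one]
    have hsb : s * b ≤ a * b := by
      rw [sub_nonpos, div_le_div_iff₀ hb hb] at h0; exact h0
    have hsa : s ≤ a := le_of_mul_le_mul_right hsb hb
    have hpa : p ≤ a * ν := by
      nlinarith [mul_self_le_mul_self hs0 hsa]
    rw [hqs0]
    have hrhs : p * 0 / (a + b * 0) + ν * (q - 0) = ν * q := by norm_num
    rw [hrhs, div_le_iff₀ hDq]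
    nlinarith [mul_nonneg hq0 (mul_nonneg (mul_nonneg hν.le hb.le) hq0)]
  rcases le_or_gt 1 (s / b - a / b) with h1 | h1
  · -- qs = 1
    have hqs1 : qs = 1 := by
      rw [hqs, max_eq_right (by linarith), min_eq_left h1]
    have hsab : a + b ≤ s := by
      have h1' : (a + b) / b ≤ s / b := by
        rw [add_div, div_self hb.ne']; linarith
      have := (div_le_div_iff₀ hb hb).mp h1'
      exact le_of_mul_le_mul_right this hb
    have hpa : ν * (a + b) ^ 2 ≤ a * p := by
      nlinarith [mul_self_le_mul_self (by positivity : (0:ℝ) ≤ a + b) hsab]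
    rw [hqs1]
    have hD1 : 0 < a + b * 1 := by nlinarith
    have hrhs : p * 1 / (a + b * 1) + ν * (q - 1)
        = (p * 1 + ν * (q - 1) * (a + b * 1)) / (a + b * 1) := by
      field_simp
    rw [hrhs, div_le_div_iff₀ hDq hD1]
    nlinarith [mul_nonneg (sub_nonneg.mpr hq1) (sub_nonneg.mpr hpa),
      mul_nonneg (sub_nonneg.mpr hq1)
        (mul_nonneg (mul_nonneg (mul_nonneg hν.le (by linarith : (0:ℝ) ≤ a + b)) hb.le)
          (sub_nonneg.mpr hq1))]
  · -- interior
    have hqsv : qs = s / b - a / b := by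
      rw [hqs, max_eq_right h0.le, min_eq_right h1.le]
    have hseq : a + b * qs = s := by rw [hqsv]; field_simp; ring
    have hspos : 0 < s := by nlinarith
    have hrhs : p * qs / (a + b * qs) + ν * (q - qs)
        = (p * qs + ν * (q - qs) * s) / s := by
      rw [hseq]; field_simp
    rw [hrhs, div_le_div_iff₀ hDq hspos]
    have hpa : p * a = ν * s ^ 2 := by linarith
    rw [← hseq] at hpa ⊢
    have hid : (p * qs + ν * (q - qs) * (a + b * qs)) * (a + b * q)
        - p * q * (a + b * qs) = ν * (a + b * qs) * b * (q - qs) ^ 2 := by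
      linear_combination (qs - q) * hpa
    have hS0 : 0 ≤ a + b * qs := by rw [hseq]; exact hspos.le
    nlinarith [mul_nonneg (mul_nonneg (mul_nonneg hν.le hS0) hb.le) (sq_nonneg (q - qs))]

/-- Proposition 2: the truncated vector `q*_f = [√(a p_f / ν)/b − a/b]₀¹` with
`∑ f, q*_f = N_c` globally maximizes `F(q) = ∑ f, p_f q_f / (a + b q_f)` over the
feasible set. -/
theorem optimal_caching_lower_bound
    (N : ℕ) (hN : 1 ≤ N) (p : Fin N → ℝ) (hp : ∀ f, 0 < p f)
    (a b : ℝ) (ha : 0 < a) (hb : 0 < b)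
    (Nc : ℝ) (hNc0 : 0 < Nc) (hNcN : Nc ≤ N)
    (ν : ℝ) (hν : 0 < ν)
    (qstar : Fin N → ℝ)
    (hqstar : ∀ f, qstar f = min 1 (max 0 (Real.sqrt (a * p f / ν) / b - a / b)))
    (hsum : ∑ f, qstar f = Nc) :
    ∀ q : Fin N → ℝ, (∀ f, 0 ≤ q f ∧ q f ≤ 1) → (∑ f, q f ≤ Nc) →
      ∑ f, p f * q f / (a + b * q f) ≤ ∑ f, p f * qstar f / (a + b * qstar f) := by
  intro q hq hqsum
  calc ∑ f, p f * q f / (a + b * q f)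
      ≤ ∑ f, (p f * qstar f / (a + b * qstar f) + ν * (q f - qstar f)) := by
        apply Finset.sum_le_sum
        intro f _
        exact key_ineq (p f) a b ν (q f) (qstar f) (hp f) ha hb hν (hqstar f)
          (hq f).1 (hq f).2
    _ = ∑ f, p f * qstar f / (a + b * qstar f) + ν * (∑ f, q f - ∑ f, qstar f) := by
        rw [Finset.sum_add_distrib, ← Finset.mul_sum, Finset.sum_sub_distrib]
    _ ≤ ∑ f, p f * qstar f / (a + b * qstar f) := by
        have h : ∑ f, q f - ∑ f, qstar f ≤ 0 := by rw [hsum]; linarith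
        nlinarith
end

section
/- Let N ≥ 1 and p_1 > p_2 > … > p_N > 0. Let (a, b, ν) and (a', b', ν') be two triples of positive reals, defining q*_f = min(1, max(0, (√(a p_f/ν))/b − a/b)) and q*'_f = min(1, max(0, (√(a' p_f/ν'))/b' − a'/b')). Suppose both solutions have the same truncation pattern: q*_f = q*'_f = 1 exactly for f ≤ N₁, q*_f = q*'_f = 0 exactly for f > N − N₀ (with N₁ + N₀ < N − 1), and both satisfy Σ_f q*_f = Σ_f q*'_f = N_c with N_c > N₁. If a/b < a'/b', then for every f with N₁ < f and f + 1 ≤ N − N₀ one has q*_f − q*_{f+1} < q*'_f − q*'_{f+1}. -/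
open Finset

/-- Corollary 1 (skewness comparison): for two optimal solutions with the same
truncation pattern and cache budget, a larger ratio `a/b` yields larger gaps
between consecutive non-truncated caching probabilities. -/
theorem caching_gap_increases_with_ratio
    (N : ℕ) (p : ℕ → ℝ) (hp : ∀ f, 0 < p f)
    (hdec : ∀ f, 1 ≤ f → f < N → p (f + 1) < p f)
    (a b ν a' b' ν' : ℝ)
    (ha : 0 < a) (hb : 0 < b) (hν : 0 < ν)
    (ha' : 0 < a') (hb' : 0 < b') (hν' : 0 < ν')
    (qstar qstar' : ℕ → ℝ)
    (hqstar : ∀ f, qstar f = min 1 (max 0 (Real.sqrt (a * p f / ν) / b - a / b)))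
    (hqstar' : ∀ f, qstar' f = min 1 (max 0 (Real.sqrt (a' * p f / ν') / b' - a' / b')))
    (N₁ N₀ : ℕ) (hpat : N₁ + N₀ < N - 1) (hN : 1 ≤ N)
    (hone : ∀ f ∈ Finset.Icc 1 N, (qstar f = 1 ↔ f ≤ N₁))
    (hone' : ∀ f ∈ Finset.Icc 1 N, (qstar' f = 1 ↔ f ≤ N₁))
    (hzero : ∀ f ∈ Finset.Icc 1 N, (qstar f = 0 ↔ N - N₀ + 1 ≤ f))
    (hzero' : ∀ f ∈ Finset.Icc 1 N, (qstar' f = 0 ↔ N - N₀ + 1 ≤ f))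
    (Nc : ℝ) (hNc : (N₁ : ℝ) < Nc)
    (hsum : ∑ f ∈ Finset.Icc 1 N, qstar f = Nc)
    (hsum' : ∑ f ∈ Finset.Icc 1 N, qstar' f = Nc)
    (hratio : a / b < a' / b') :
    ∀ f, N₁ < f → f + 1 ≤ N - N₀ →
      qstar f - qstar (f + 1) < qstar' f - qstar' (f + 1) := by
  have hK : N₁ + N₀ + 2 ≤ N := by omega
  -- closed form on the middle (non-truncated) range
  have key : ∀ (A B V : ℝ), 0 < A → 0 < B → 0 < V →
      ∀ (q : ℕ → ℝ),
      (∀ f, q f = min 1 (max 0 (Real.sqrt (A * p f / V) / B - A / B))) →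
      (∀ f ∈ Finset.Icc 1 N, (q f = 1 ↔ f ≤ N₁)) →
      (∀ f ∈ Finset.Icc 1 N, (q f = 0 ↔ N - N₀ + 1 ≤ f)) →
      ∀ f, N₁ < f → f ≤ N - N₀ →
        q f = Real.sqrt (A / V) / B * Real.sqrt (p f) - A / B := by
    intro A B V hA hB hV q hq h1 h0 f hf1 hf2
    have hfm : f ∈ Finset.Icc 1 N := by
      simp only [Finset.mem_Icc]; omega
    have hne1 : q f ≠ 1 := by
      intro h; exact absurd ((h1 f hfm).mp h) (by omega)
    have hne0 : q f ≠ 0 := by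
      intro h; exact absurd ((h0 f hfm).mp h) (by omega)
    have hsq : Real.sqrt (A * p f / V) = Real.sqrt (A / V) * Real.sqrt (p f) := by
      rw [← Real.sqrt_mul (by positivity)]
      ring_nf
    set x := Real.sqrt (A / V) / B * Real.sqrt (p f) - A / B with hx
    have hqx : q f = min 1 (max 0 x) := by
      rw [hq f, hsq, hx]; ring_nf
    rcases le_or_gt x 0 with h | h
    · exfalso; apply hne0
      rw [hqx, max_eq_left h, min_eq_right zero_le_one]
    · rw [max_eq_right h.le] at hqx
      rcases le_or_gt 1 x with h' | h'
      · exfalso; apply hne1; rw [hqx, min_eq_left h']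
      · rw [hqx, min_eq_right h'.le]
  set c := Real.sqrt (a / ν) / b with hcdef
  set c' := Real.sqrt (a' / ν') / b' with hcdef'
  have kq : ∀ f, N₁ < f → f ≤ N - N₀ → qstar f = c * Real.sqrt (p f) - a / b :=
    key a b ν ha hb hν qstar hqstar hone hzero
  have kq' : ∀ f, N₁ < f → f ≤ N - N₀ → qstar' f = c' * Real.sqrt (p f) - a' / b' :=
    key a' b' ν' ha' hb' hν' qstar' hqstar' hone' hzero'
  -- split the sum
  have hsplit : ∀ (q : ℕ → ℝ),
      (∀ f ∈ Finset.Icc 1 N, (q f = 1 ↔ f ≤ N₁)) →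
      (∀ f ∈ Finset.Icc 1 N, (q f = 0 ↔ N - N₀ + 1 ≤ f)) →
      ∑ f ∈ Finset.Icc 1 N, q f
        = (N₁ : ℝ) + ∑ f ∈ Finset.Ioc N₁ (N - N₀), q f := by
    intro q h1 h0
    have hIcc : Finset.Icc 1 N = Finset.Ioc 0 N := by
      rw [← Finset.Icc_add_one_left_eq_Ioc, zero_add]
    have e1 : (∑ f ∈ Finset.Ioc 0 N₁, q f) + ∑ f ∈ Finset.Ioc N₁ N, q f
        = ∑ f ∈ Finset.Ioc 0 N, q f :=
      Finset.sum_Ioc_consecutive q (by omega) (by omega)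
    have e2 : (∑ f ∈ Finset.Ioc N₁ (N - N₀), q f) + ∑ f ∈ Finset.Ioc (N - N₀) N, q f
        = ∑ f ∈ Finset.Ioc N₁ N, q f :=
      Finset.sum_Ioc_consecutive q (by omega) (by omega)
    have s1 : ∑ f ∈ Finset.Ioc 0 N₁, q f = (N₁ : ℝ) := by
      have hco : ∀ f ∈ Finset.Ioc 0 N₁, q f = (1 : ℝ) := by
        intro f hf
        rw [Finset.mem_Ioc] at hf
        exact (h1 f (by simp only [Finset.mem_Icc]; omega)).mpr hf.2
      rw [Finset.sum_congr rfl hco, Finset.sum_const, Nat.card_Ioc]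
      simp
    have s3 : ∑ f ∈ Finset.Ioc (N - N₀) N, q f = 0 := by
      apply Finset.sum_eq_zero
      intro f hf
      rw [Finset.mem_Ioc] at hf
      exact (h0 f (by simp only [Finset.mem_Icc]; omega)).mpr (by omega)
    rw [hIcc, ← e1, ← e2, s1, s3]; ring
  set S := ∑ f ∈ Finset.Ioc N₁ (N - N₀), Real.sqrt (p f) with hS
  set k := ((N - N₀ - N₁ : ℕ) : ℝ) with hk
  have hmid : ∀ (C R : ℝ) (q : ℕ → ℝ),
      (∀ f, N₁ < f → f ≤ N - N₀ → q f = C * Real.sqrt (p f) - R) →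
      ∑ f ∈ Finset.Ioc N₁ (N - N₀), q f = C * S - k * R := by
    intro C R q hq
    have hco : ∀ f ∈ Finset.Ioc N₁ (N - N₀), q f = C * Real.sqrt (p f) - R := by
      intro f hf
      rw [Finset.mem_Ioc] at hf; exact hq f hf.1 hf.2
    rw [Finset.sum_congr rfl hco, Finset.sum_sub_distrib, ← Finset.mul_sum,
      Finset.sum_const, Nat.card_Ioc, nsmul_eq_mul, hS, hk]
  have eq1 : c * S - k * (a / b) = Nc - (N₁ : ℝ) := by
    have := hsplit qstar hone hzero
    rw [hsum, hmid c (a / b) qstar kq] at this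
    linarith
  have eq2 : c' * S - k * (a' / b') = Nc - (N₁ : ℝ) := by
    have := hsplit qstar' hone' hzero'
    rw [hsum', hmid c' (a' / b') qstar' kq'] at this
    linarith
  have hSpos : 0 < S := by
    apply Finset.sum_pos
    · intro f _; exact Real.sqrt_pos.mpr (hp f)
    · exact Finset.nonempty_Ioc.mpr (by omega)
  have hkpos : (0 : ℝ) < k := by
    rw [hk]; exact_mod_cast Nat.pos_of_ne_zero (by omega)
  have hcc : c < c' := by nlinarith [mul_lt_mul_of_pos_left hratio hkpos]
  intro f hf1 hf2
  have hfN : f + 1 ≤ N := by omega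
  have hd : Real.sqrt (p (f + 1)) < Real.sqrt (p f) := by
    apply Real.sqrt_lt_sqrt (hp (f + 1)).le
    exact hdec f (by omega) (by omega)
  rw [kq f hf1 (by omega), kq (f + 1) (by omega) hf2,
      kq' f hf1 (by omega), kq' (f + 1) (by omega) hf2]
  nlinarith [mul_lt_mul_of_pos_right hcc (sub_pos.mpr hd)]
end

section
/- Let N ≥ 1 and p_1 > p_2 > … > p_N > 0. Let (a, ν) and (a', ν') be pairs of positive reals, defining q*_f = min(1, max(0, √(a p_f/ν) − a)) and q*'_f = min(1, max(0, √(a' p_f/ν') − a')). Suppose both solutions have the same truncation pattern: q*_f = q*'_f = 1 exactly for f ≤ N₁, q*_f = q*'_f = 0 exactly for f > N − N₀ (with N₁ + N₀ < N − 1), and both satisfy Σ_f q*_f = Σ_f q*'_f = N_c with N_c > N₁. If a < a', then for every f with N₁ < f and f + 1 ≤ N − N₀ one has q*_f − q*_{f+1} < q*'_f − q*'_{f+1}. -/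
open Finset

/-- Corollary 3 (skewness comparison, `b = 1` case): for two optimal solutions with the
same truncation pattern and cache budget, a larger constant `a` yields larger gaps
between consecutive non-truncated caching probabilities. -/
theorem caching_gap_increases_with_constant
    (N : ℕ) (p : ℕ → ℝ) (hp : ∀ f, 0 < p f)
    (hdec : ∀ f, 1 ≤ f → f < N → p (f + 1) < p f)
    (a ν a' ν' : ℝ)
    (ha : 0 < a) (hν : 0 < ν) (ha' : 0 < a') (hν' : 0 < ν')
    (qstar qstar' : ℕ → ℝ)
    (hqstar : ∀ f, qstar f = min 1 (max 0 (Real.sqrt (a * p f / ν) - a)))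
    (hqstar' : ∀ f, qstar' f = min 1 (max 0 (Real.sqrt (a' * p f / ν') - a')))
    (N₁ N₀ : ℕ) (hpat : N₁ + N₀ < N - 1) (hN : 1 ≤ N)
    (hone : ∀ f ∈ Finset.Icc 1 N, (qstar f = 1 ↔ f ≤ N₁))
    (hone' : ∀ f ∈ Finset.Icc 1 N, (qstar' f = 1 ↔ f ≤ N₁))
    (hzero : ∀ f ∈ Finset.Icc 1 N, (qstar f = 0 ↔ N - N₀ + 1 ≤ f))
    (hzero' : ∀ f ∈ Finset.Icc 1 N, (qstar' f = 0 ↔ N - N₀ + 1 ≤ f))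
    (Nc : ℝ) (hNc : (N₁ : ℝ) < Nc)
    (hsum : ∑ f ∈ Finset.Icc 1 N, qstar f = Nc)
    (hsum' : ∑ f ∈ Finset.Icc 1 N, qstar' f = Nc)
    (haa : a < a') :
    ∀ f, N₁ < f → f + 1 ≤ N - N₀ →
      qstar f - qstar (f + 1) < qstar' f - qstar' (f + 1) := by
  -- basic nat facts
  have hNN : N₁ + 1 ≤ N - N₀ := by omega
  have hNle : N - N₀ ≤ N := by omega
  have hN₁le : N₁ ≤ N := by omega
  -- pointwise formula on the non-truncated range
  have main : ∀ (A V : ℝ), 0 < A → 0 < V → ∀ (q : ℕ → ℝ),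
      (∀ f, q f = min 1 (max 0 (Real.sqrt (A * p f / V) - A))) →
      (∀ f ∈ Finset.Icc 1 N, (q f = 1 ↔ f ≤ N₁)) →
      (∀ f ∈ Finset.Icc 1 N, (q f = 0 ↔ N - N₀ + 1 ≤ f)) →
      ∀ f ∈ Finset.Ioc N₁ (N - N₀),
        q f = Real.sqrt (A / V) * Real.sqrt (p f) - A := by
    intro A V hA hV q hq h1 h0 f hf
    simp only [Finset.mem_Ioc] at hf
    have hfIcc : f ∈ Finset.Icc 1 N := by
      simp only [Finset.mem_Icc]; omega
    have hsqrt : Real.sqrt (A * p f / V) = Real.sqrt (A / V) * Real.sqrt (p f) := by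
      rw [← Real.sqrt_mul (by positivity : (0:ℝ) ≤ A / V)]
      ring_nf
    set x : ℝ := Real.sqrt (A / V) * Real.sqrt (p f) - A with hx
    have hqf : q f = min 1 (max 0 x) := by rw [hq f, hsqrt]
    rcases le_or_gt x 0 with hx0 | hx0
    · exfalso
      have : q f = 0 := by
        rw [hqf, max_eq_left hx0, min_eq_right (by norm_num)]
      have := (h0 f hfIcc).mp this
      omega
    · rcases le_or_gt 1 x with hx1 | hx1
      · exfalso
        have : q f = 1 := by
          rw [hqf, max_eq_right hx0.le, min_eq_left hx1]
        have := (h1 f hfIcc).mp this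
        omega
      · rw [hqf, max_eq_right hx0.le, min_eq_right hx1.le]
  -- sum formula
  have sumeq : ∀ (A V : ℝ), 0 < A → 0 < V → ∀ (q : ℕ → ℝ),
      (∀ f, q f = min 1 (max 0 (Real.sqrt (A * p f / V) - A))) →
      (∀ f ∈ Finset.Icc 1 N, (q f = 1 ↔ f ≤ N₁)) →
      (∀ f ∈ Finset.Icc 1 N, (q f = 0 ↔ N - N₀ + 1 ≤ f)) →
      ∑ f ∈ Finset.Icc 1 N, q f =
        (N₁ : ℝ) + (Real.sqrt (A / V) * (∑ f ∈ Finset.Ioc N₁ (N - N₀), Real.sqrt (p f))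
          - ((N - N₀ : ℕ) - N₁ : ℝ) * A) := by
    intro A V hA hV q hq h1 h0
    have hIcc : Finset.Icc 1 N = Finset.Ioc 0 N := by
      rw [← Finset.Icc_add_one_left_eq_Ioc, zero_add]
    rw [hIcc]
    rw [← Finset.sum_Ioc_consecutive q (Nat.zero_le (N - N₀)) hNle,
        ← Finset.sum_Ioc_consecutive q (Nat.zero_le N₁) (by omega : N₁ ≤ N - N₀)]
    have e1 : ∑ f ∈ Finset.Ioc 0 N₁, q f = (N₁ : ℝ) := by
      rw [Finset.sum_congr rfl (fun f hf => by
        simp only [Finset.mem_Ioc] at hf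
        exact (h1 f (by simp only [Finset.mem_Icc]; omega)).mpr hf.2)]
      simp
    have e3 : ∑ f ∈ Finset.Ioc (N - N₀) N, q f = 0 := by
      apply Finset.sum_eq_zero
      intro f hf
      simp only [Finset.mem_Ioc] at hf
      exact (h0 f (by simp only [Finset.mem_Icc]; omega)).mpr (by omega)
    have e2 : ∑ f ∈ Finset.Ioc N₁ (N - N₀), q f =
        Real.sqrt (A / V) * (∑ f ∈ Finset.Ioc N₁ (N - N₀), Real.sqrt (p f))
          - ((N - N₀ : ℕ) - N₁ : ℝ) * A := by
      rw [Finset.sum_congr rfl (fun f hf => main A V hA hV q hq h1 h0 f hf)]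
      rw [Finset.sum_sub_distrib, Finset.mul_sum, Finset.sum_const,
        Nat.card_Ioc, nsmul_eq_mul]
      push_cast [Nat.cast_sub (by omega : N₁ ≤ N - N₀)]
      ring
    rw [e1, e2, e3]
    ring
  set S : ℝ := ∑ f ∈ Finset.Ioc N₁ (N - N₀), Real.sqrt (p f) with hS
  set m : ℝ := ((N - N₀ : ℕ) - N₁ : ℝ) with hm
  set c : ℝ := Real.sqrt (a / ν) with hc
  set c' : ℝ := Real.sqrt (a' / ν') with hc'
  have hm1 : (1 : ℝ) ≤ m := by
    rw [hm]
    have : (1 : ℝ) ≤ ((N - N₀ : ℕ) : ℝ) - (N₁ : ℝ) := by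
      have : (N₁ : ℝ) + 1 ≤ ((N - N₀ : ℕ) : ℝ) := by exact_mod_cast hNN
      linarith
    linarith
  have hSpos : 0 < S := by
    rw [hS]
    apply Finset.sum_pos
    · intro f _; exact Real.sqrt_pos.mpr (hp f)
    · exact ⟨N₁ + 1, by simp only [Finset.mem_Ioc]; omega⟩
  have heq1 : Nc = (N₁ : ℝ) + (c * S - m * a) := by
    rw [← hsum, hc]; exact (sumeq a ν ha hν qstar hqstar hone hzero)
  have heq2 : Nc = (N₁ : ℝ) + (c' * S - m * a') := by
    rw [← hsum', hc']; exact (sumeq a' ν' ha' hν' qstar' hqstar' hone' hzero')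
  have hcc : c < c' := by nlinarith [hSpos, hm1, haa]
  intro f hf1 hf2
  have hfmem : f ∈ Finset.Ioc N₁ (N - N₀) := by
    simp only [Finset.mem_Ioc]; omega
  have hfmem1 : f + 1 ∈ Finset.Ioc N₁ (N - N₀) := by
    simp only [Finset.mem_Ioc]; omega
  rw [main a ν ha hν qstar hqstar hone hzero f hfmem,
      main a ν ha hν qstar hqstar hone hzero (f + 1) hfmem1,
      main a' ν' ha' hν' qstar' hqstar' hone' hzero' f hfmem,
      main a' ν' ha' hν' qstar' hqstar' hone' hzero' (f + 1) hfmem1]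
  have hplt : p (f + 1) < p f := hdec f (by omega) (by omega)
  have hd : 0 < Real.sqrt (p f) - Real.sqrt (p (f + 1)) := by
    have := Real.sqrt_lt_sqrt (hp (f + 1)).le hplt
    linarith
  nlinarith [hd, hcc]
end

section
/- Let α > 2, M > 0, and c > 0 be real numbers. Then ∫_0^∞ (1 − (1 + c v^{−α})^{−M}) · 2v dv = (Γ(1 − 2/α) · Γ(M + 2/α) / Γ(M)) · c^{2/α}, where Γ denotes the Gamma function. -/
open MeasureTheory Real Set Filter Topology


lemma realBeta_Ioo (a b : ℝ) (ha : 0 < a) (hb : 0 < b) :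
    ∫ x in Set.Ioo (0:ℝ) 1, x ^ (a-1) * (1-x) ^ (b-1)
      = Real.Gamma a * Real.Gamma b / Real.Gamma (a+b) := by
  have hG : Complex.Gamma (a:ℂ) * Complex.Gamma (b:ℂ)
      = Complex.Gamma ((a:ℂ)+(b:ℂ)) * Complex.betaIntegral a b :=
    Complex.Gamma_mul_Gamma_eq_betaIntegral (by simpa using ha) (by simpa using hb)
  have hreal : Complex.betaIntegral (a:ℂ) (b:ℂ)
      = ((∫ x in (0:ℝ)..1, x ^ (a-1) * (1-x) ^ (b-1) : ℝ) : ℂ) := by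
    rw [Complex.betaIntegral, ← intervalIntegral.integral_ofReal]
    apply intervalIntegral.integral_congr
    intro x hx
    rw [Set.uIcc_of_le (by norm_num : (0:ℝ) ≤ 1)] at hx
    obtain ⟨hx0, hx1⟩ := hx
    push_cast
    rw [Complex.ofReal_cpow hx0, Complex.ofReal_cpow (by linarith : (0:ℝ) ≤ 1 - x)]
    push_cast
    ring
  have hcast : (Real.Gamma (a+b) : ℂ) = Complex.Gamma ((a:ℂ)+(b:ℂ)) := by
    rw [← Complex.Gamma_ofReal]; push_cast; ring_nf
  have hGab_ne : Complex.Gamma ((a:ℂ)+(b:ℂ)) ≠ 0 := by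
    rw [← hcast]
    exact_mod_cast (Real.Gamma_pos_of_pos (by linarith : (0:ℝ) < a + b)).ne'
  have hbeta : Complex.betaIntegral (a:ℂ) (b:ℂ)
      = Complex.Gamma (a:ℂ) * Complex.Gamma (b:ℂ) / Complex.Gamma ((a:ℂ)+(b:ℂ)) := by
    rw [eq_div_iff hGab_ne]; linear_combination -hG
  have key : ((∫ x in (0:ℝ)..1, x ^ (a-1) * (1-x) ^ (b-1) : ℝ) : ℂ)
      = ((Real.Gamma a * Real.Gamma b / Real.Gamma (a+b) : ℝ) : ℂ) := by
    rw [← hreal, hbeta]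
    push_cast [Complex.Gamma_ofReal, hcast]
    ring
  have := Complex.ofReal_inj.mp key
  rw [← this, intervalIntegral.integral_of_le (by norm_num : (0:ℝ) ≤ 1),
    integral_Ioc_eq_integral_Ioo]

lemma realBeta_Ioi (a b : ℝ) (ha : 0 < a) (hb : 0 < b) :
    ∫ t in Set.Ioi (0:ℝ), t ^ (a-1) * (1+t) ^ (-(a+b))
      = Real.Gamma a * Real.Gamma b / Real.Gamma (a+b) := by
  have himg : (fun t : ℝ => t / (1+t)) '' Set.Ioi 0 = Set.Ioo 0 1 := by
    ext y
    constructor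
    · rintro ⟨t, ht, rfl⟩
      simp only [Set.mem_Ioi] at ht
      have h1t : (0:ℝ) < 1 + t := by linarith
      constructor
      · positivity
      · rw [div_lt_one h1t]; linarith
    · rintro ⟨hy0, hy1⟩
      refine ⟨y / (1-y), ?_, ?_⟩
      · exact div_pos hy0 (by linarith)
      · have h1y : (1:ℝ) - y ≠ 0 := sub_ne_zero_of_ne hy1.ne'
        field_simp
        ring
  have hder : ∀ t ∈ Set.Ioi (0:ℝ),
      HasDerivWithinAt (fun t : ℝ => t / (1+t)) (1/(1+t)^2) (Set.Ioi 0) t := by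
    intro t ht
    simp only [Set.mem_Ioi] at ht
    have h1t : (1:ℝ) + t ≠ 0 := by positivity
    have := (hasDerivAt_id' t).div ((hasDerivAt_id' t).const_add 1) h1t
    exact this.hasDerivWithinAt.congr_deriv (by ring)
  have hinj : Set.InjOn (fun t : ℝ => t / (1+t)) (Set.Ioi 0) := by
    intro x hx y hy h
    simp only [Set.mem_Ioi] at hx hy
    have hx1 : (1:ℝ) + x ≠ 0 := by positivity
    have hy1 : (1:ℝ) + y ≠ 0 := by positivity
    field_simp at h
    linarith
  have himage := integral_image_eq_integral_abs_deriv_smul measurableSet_Ioi hder hinj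
    (fun x => x ^ (a-1) * (1-x) ^ (b-1))
  rw [himg, realBeta_Ioo a b ha hb] at himage
  rw [himage]
  refine setIntegral_congr_fun measurableSet_Ioi fun t ht => ?_
  simp only [Set.mem_Ioi] at ht
  have h1t : (0:ℝ) < 1 + t := by linarith
  have habs : |1/(1+t)^2| = (1+t) ^ (-(2:ℝ)) := by
    rw [abs_of_pos (by positivity), one_div, ← Real.rpow_natCast (1+t) 2,
      ← Real.rpow_neg h1t.le]
    norm_num
  have e1 : (1:ℝ) - t/(1+t) = (1+t)⁻¹ := by field_simp; ring
  have e2 : (t/(1+t)) ^ (a-1) = t ^ (a-1) * (1+t) ^ (-(a-1)) := by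
    rw [div_rpow ht.le h1t.le, Real.rpow_neg h1t.le, div_eq_mul_inv]
  have e3 : ((1+t):ℝ)⁻¹ ^ (b-1) = (1+t) ^ (-(b-1)) := by
    rw [← Real.rpow_neg_one, ← Real.rpow_mul h1t.le]
    congr 1; ring
  have combo : (1+t)^(-(2:ℝ)) * ((1+t)^(-(a-1)) * (1+t)^(-(b-1))) = (1+t)^(-(a+b)) := by
    rw [← Real.rpow_add h1t, ← Real.rpow_add h1t]
    congr 1; ring
  simp only [smul_eq_mul]
  rw [habs, e1, e2, e3]
  linear_combination (-(t ^ (a-1))) * combo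

lemma aux_le_mul {M t : ℝ} (hM : 0 < M) (ht : 0 ≤ t) : 1 - (1+t) ^ (-M) ≤ M * t := by
  have h1t : (0:ℝ) < 1 + t := by linarith
  rcases le_or_gt M 1 with hM1 | hM1
  · set y := (1+t) ^ M with hy
    have hy1 : 1 ≤ y := Real.one_le_rpow (by linarith) hM.le
    have hyle : y ≤ 1 + M * t := by
      have := rpow_one_add_le_one_add_mul_self (by linarith : (-1:ℝ) ≤ t) hM.le hM1
      simpa [hy] using this
    rw [show (1+t) ^ (-M) = y⁻¹ by rw [Real.rpow_neg h1t.le, hy]]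
    have hy0 : (0:ℝ) < y := by linarith
    have hid : y * y⁻¹ = 1 := mul_inv_cancel₀ hy0.ne'
    have hile : y⁻¹ ≤ 1 := inv_le_one_of_one_le₀ hy1
    nlinarith [mul_nonneg (sub_nonneg.mpr hy1) (sub_nonneg.mpr hile)]
  · set u : ℝ := (1+t)⁻¹ - 1 with hu
    have h1u : (1:ℝ) + u = (1+t)⁻¹ := by rw [hu]; ring
    have hu1 : (-1:ℝ) ≤ u := by
      have : (0:ℝ) < (1+t)⁻¹ := by positivity
      rw [hu]; linarith
    have hber := one_add_mul_self_le_rpow_one_add hu1 hM1.le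
    have hpow : ((1:ℝ) + u) ^ M = (1+t) ^ (-M) := by
      rw [h1u, ← Real.rpow_neg_one, ← Real.rpow_mul h1t.le]
      norm_num
    rw [hpow] at hber
    have hu_ge : -u ≤ t := by
      rw [hu]
      have h1 : (1+t)⁻¹ * (1+t) = 1 := inv_mul_cancel₀ h1t.ne'
      nlinarith [inv_pos.mpr h1t, mul_nonneg (inv_pos.mpr h1t).le ht]
    nlinarith


lemma aux_nonneg {M t : ℝ} (hM : 0 ≤ M) (ht : 0 ≤ t) : 0 ≤ 1 - (1+t) ^ (-M) := by
  have : (1+t) ^ (-M) ≤ 1 :=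
    Real.rpow_le_one_of_one_le_of_nonpos (by linarith) (by linarith)
  linarith

lemma integrableOn_rpow_Ioc {s : ℝ} (hs1 : s < 1) :
    IntegrableOn (fun t : ℝ => t ^ (-s)) (Set.Ioc (0:ℝ) 1) := by
  have := intervalIntegral.intervalIntegrable_rpow' (r := -s) (by linarith) (a := 0) (b := 1)
  rwa [intervalIntegrable_iff_integrableOn_Ioc_of_le zero_le_one] at this

lemma integrableOn_h2 {s M : ℝ} (hs0 : 0 < s) (hs1 : s < 1) (hM : 0 < M) :
    IntegrableOn (fun t : ℝ => t ^ (-s) * (1+t) ^ (-(M+1))) (Set.Ioi (0:ℝ)) := by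
  have cont : ContinuousOn (fun t : ℝ => t ^ (-s) * (1+t) ^ (-(M+1))) (Set.Ioi 0) := by
    apply ContinuousOn.mul
    · exact continuousOn_id.rpow_const fun x hx => Or.inl (ne_of_gt hx)
    · refine (continuousOn_const.add continuousOn_id).rpow_const fun x hx => Or.inl ?_
      simp only [Set.mem_Ioi, id] at hx ⊢
      exact ne_of_gt (show (0:ℝ) < 1 + x by linarith)
  rw [← Set.Ioc_union_Ioi_eq_Ioi (zero_le_one (α := ℝ))]
  refine IntegrableOn.union ?_ ?_
  · refine Integrable.mono' (integrableOn_rpow_Ioc hs1)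
      ((cont.mono Set.Ioc_subset_Ioi_self).aestronglyMeasurable measurableSet_Ioc) ?_
    rw [ae_restrict_iff' measurableSet_Ioc]
    filter_upwards with t ht
    obtain ⟨ht0, _⟩ := ht
    have h1 : (0:ℝ) ≤ t ^ (-s) := Real.rpow_nonneg ht0.le _
    have h2 : (0:ℝ) ≤ (1+t) ^ (-(M+1)) := Real.rpow_nonneg (by linarith) _
    rw [Real.norm_eq_abs, abs_of_nonneg (by positivity)]
    exact mul_le_of_le_one_right h1
      (Real.rpow_le_one_of_one_le_of_nonpos (by linarith) (by linarith))
  · refine Integrable.mono' (integrableOn_Ioi_rpow_of_lt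
      (show -s + -(M+1) < -1 by linarith) one_pos)
      ((cont.mono (Set.Ioi_subset_Ioi zero_le_one)).aestronglyMeasurable measurableSet_Ioi) ?_
    rw [ae_restrict_iff' measurableSet_Ioi]
    filter_upwards with t ht
    simp only [Set.mem_Ioi] at ht
    have ht0 : (0:ℝ) < t := lt_trans one_pos ht
    have h1 : (0:ℝ) ≤ t ^ (-s) := Real.rpow_nonneg ht0.le _
    have h2 : (0:ℝ) ≤ (1+t) ^ (-(M+1)) := Real.rpow_nonneg (by linarith) _
    rw [Real.norm_eq_abs, abs_of_nonneg (by positivity), Real.rpow_add ht0]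
    exact mul_le_mul_of_nonneg_left
      (Real.rpow_le_rpow_of_nonpos ht0 (by linarith) (by linarith)) h1

lemma integrableOn_j {s M : ℝ} (hs0 : 0 < s) (hs1 : s < 1) (hM : 0 < M) :
    IntegrableOn (fun t : ℝ => t ^ (-s-1) * (1 - (1+t) ^ (-M))) (Set.Ioi (0:ℝ)) := by
  have hb : ∀ t : ℝ, 0 < t → 1 - (1+t) ^ (-M) ≤ M * t :=
    fun t ht => aux_le_mul hM ht.le
  have cont : ContinuousOn (fun t : ℝ => t ^ (-s-1) * (1 - (1+t) ^ (-M))) (Set.Ioi 0) := by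
    apply ContinuousOn.mul
    · exact continuousOn_id.rpow_const fun x hx => Or.inl (ne_of_gt hx)
    · refine continuousOn_const.sub ?_
      refine (continuousOn_const.add continuousOn_id).rpow_const fun x hx => Or.inl ?_
      simp only [Set.mem_Ioi, id] at hx ⊢
      exact ne_of_gt (show (0:ℝ) < 1 + x by linarith)
  rw [← Set.Ioc_union_Ioi_eq_Ioi (zero_le_one (α := ℝ))]
  refine IntegrableOn.union ?_ ?_
  · refine Integrable.mono' ((integrableOn_rpow_Ioc hs1).const_mul M)
      ((cont.mono Set.Ioc_subset_Ioi_self).aestronglyMeasurable measurableSet_Ioc) ?_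
    rw [ae_restrict_iff' measurableSet_Ioc]
    filter_upwards with t ht
    obtain ⟨ht0, _⟩ := ht
    have h1 : (0:ℝ) ≤ t ^ (-s-1) := Real.rpow_nonneg ht0.le _
    have h2 : (0:ℝ) ≤ 1 - (1+t) ^ (-M) := aux_nonneg hM.le ht0.le
    rw [Real.norm_eq_abs, abs_of_nonneg (by positivity)]
    calc t ^ (-s-1) * (1 - (1+t) ^ (-M)) ≤ t ^ (-s-1) * (M * t) :=
          mul_le_mul_of_nonneg_left (hb t ht0) h1
      _ = M * (t ^ (-s-1) * t ^ (1:ℝ)) := by rw [Real.rpow_one]; ring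
      _ = M * t ^ (-s) := by rw [← Real.rpow_add ht0]; norm_num
  · refine Integrable.mono' (integrableOn_Ioi_rpow_of_lt
      (show -s - 1 < -1 by linarith) one_pos)
      ((cont.mono (Set.Ioi_subset_Ioi zero_le_one)).aestronglyMeasurable measurableSet_Ioi) ?_
    rw [ae_restrict_iff' measurableSet_Ioi]
    filter_upwards with t ht
    simp only [Set.mem_Ioi] at ht
    have ht0 : (0:ℝ) < t := lt_trans one_pos ht
    have h1 : (0:ℝ) ≤ t ^ (-s-1) := Real.rpow_nonneg ht0.le _
    have h2 : (0:ℝ) ≤ 1 - (1+t) ^ (-M) := aux_nonneg hM.le ht0.le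
    rw [Real.norm_eq_abs, abs_of_nonneg (by positivity)]
    have : 1 - (1+t) ^ (-M) ≤ 1 := by
      have : (0:ℝ) ≤ (1+t) ^ (-M) := Real.rpow_nonneg (by linarith) _
      linarith
    exact mul_le_of_le_one_right h1 this

lemma J_eq {s M : ℝ} (hs0 : 0 < s) (hs1 : s < 1) (hM : 0 < M) :
    ∫ t in Set.Ioi (0:ℝ), t ^ (-s-1) * (1 - (1+t) ^ (-M))
      = (M/s) * ∫ t in Set.Ioi (0:ℝ), t ^ (-s) * (1+t) ^ (-(M+1)) := by
  set G : ℝ → ℝ := fun t => -(1/s) * (t ^ (-s) * (1 - (1+t) ^ (-M))) with hGdef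
  set G' : ℝ → ℝ := fun t =>
    t ^ (-s-1) * (1 - (1+t) ^ (-M)) - (M/s) * (t ^ (-s) * (1+t) ^ (-(M+1))) with hG'def
  have hderiv : ∀ t ∈ Set.Ioi (0:ℝ), HasDerivAt G (G' t) t := by
    intro t ht
    simp only [Set.mem_Ioi] at ht
    have h1t : (0:ℝ) < 1 + t := by linarith
    have h1 : HasDerivAt (fun t : ℝ => t ^ (-s)) (-s * t ^ (-s-1)) t := by
      simpa using Real.hasDerivAt_rpow_const (x := t) (p := -s) (Or.inl ht.ne')
    have h2 : HasDerivAt (fun t : ℝ => 1 - (1+t) ^ (-M)) (M * (1+t) ^ (-(M+1))) t := by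
      have hb : HasDerivAt (fun t : ℝ => 1+t) 1 t := (hasDerivAt_id t).const_add 1
      have := (hb.rpow_const (p := -M) (Or.inl h1t.ne')).const_sub (1:ℝ)
      refine this.congr_deriv ?_
      rw [show -(M+1) = -M - 1 by ring]
      ring
    have := (h1.mul h2).const_mul (-(1/s))
    refine this.congr_deriv ?_
    simp only [hG'def]
    field_simp
    ring
  have tt : Tendsto G atTop (𝓝 0) := by
    apply squeeze_zero_norm' (a := fun t : ℝ => (1/s) * t ^ (-s))
    · filter_upwards [eventually_gt_atTop (0:ℝ)] with t ht
      have hX : (0:ℝ) ≤ t ^ (-s) * (1 - (1+t) ^ (-M)) :=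
        mul_nonneg (Real.rpow_nonneg ht.le _) (aux_nonneg hM.le ht.le)
      rw [hGdef]
      simp only [Real.norm_eq_abs, abs_mul, abs_neg, abs_of_nonneg (by positivity : (0:ℝ) ≤ 1/s),
        abs_of_nonneg hX]
      refine mul_le_mul_of_nonneg_left ?_ (by positivity)
      refine mul_le_of_le_one_right (Real.rpow_nonneg ht.le _) ?_
      have : (0:ℝ) ≤ (1+t) ^ (-M) := Real.rpow_nonneg (by linarith) _
      linarith
    · have := (tendsto_rpow_neg_atTop hs0).const_mul (1/s)
      simpa using this
  have t0 : Tendsto G (𝓝[>] (0:ℝ)) (𝓝 0) := by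
    apply squeeze_zero_norm' (a := fun t : ℝ => (M/s) * t ^ (1-s))
    · filter_upwards [self_mem_nhdsWithin] with t ht
      simp only [Set.mem_Ioi] at ht
      have hX : (0:ℝ) ≤ t ^ (-s) * (1 - (1+t) ^ (-M)) :=
        mul_nonneg (Real.rpow_nonneg ht.le _) (aux_nonneg hM.le ht.le)
      rw [hGdef]
      simp only [Real.norm_eq_abs, abs_mul, abs_neg, abs_of_nonneg (by positivity : (0:ℝ) ≤ 1/s),
        abs_of_nonneg hX]
      calc (1/s) * (t ^ (-s) * (1 - (1+t) ^ (-M)))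
          ≤ (1/s) * (t ^ (-s) * (M * t)) := by
            refine mul_le_mul_of_nonneg_left ?_ (by positivity)
            exact mul_le_mul_of_nonneg_left (aux_le_mul hM ht.le) (Real.rpow_nonneg ht.le _)
        _ = (M/s) * (t ^ (-s) * t ^ (1:ℝ)) := by rw [Real.rpow_one]; ring
        _ = (M/s) * t ^ (1-s) := by rw [← Real.rpow_add ht]; ring_nf
    · have hc : ContinuousAt (fun t : ℝ => t ^ (1-s)) 0 :=
        Real.continuousAt_rpow_const 0 (1-s) (Or.inr (by linarith))
      have h2 : Tendsto (fun t : ℝ => t ^ (1-s)) (𝓝[>] (0:ℝ)) (𝓝 (0 ^ (1-s))) :=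
        hc.tendsto.mono_left nhdsWithin_le_nhds
      have := h2.const_mul (M/s)
      simpa [Real.zero_rpow (show (1:ℝ) - s ≠ 0 by linarith)] using this
  have hGint : IntegrableOn G' (Set.Ioi (0:ℝ)) := by
    have := (integrableOn_j hs0 hs1 hM).sub ((integrableOn_h2 hs0 hs1 hM).const_mul (M/s))
    exact this
  have e_Ioi1 : ∫ t in Set.Ioi (1:ℝ), G' t = 0 - G 1 := by
    refine integral_Ioi_of_hasDerivAt_of_tendsto
      ((hderiv 1 (by norm_num)).continuousAt.continuousWithinAt)
      (fun x hx => hderiv x (Set.Ioi_subset_Ioi zero_le_one hx)) ?_ tt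
    exact hGint.mono_set (Set.Ioi_subset_Ioi zero_le_one)
  have e_01 : ∫ t in (0:ℝ)..1, G' t = G 1 - 0 := by
    refine intervalIntegral.integral_eq_sub_of_hasDerivAt_of_tendsto one_pos
      (fun x hx => hderiv x hx.1) ?_ t0
      ((hderiv 1 (by norm_num)).continuousAt.continuousWithinAt)
    rw [intervalIntegrable_iff_integrableOn_Ioc_of_le zero_le_one]
    exact hGint.mono_set Set.Ioc_subset_Ioi_self
  have hG'zero : ∫ t in Set.Ioi (0:ℝ), G' t = 0 := by
    rw [← Set.Ioc_union_Ioi_eq_Ioi (zero_le_one (α := ℝ)),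
      setIntegral_union (Set.Ioc_disjoint_Ioi le_rfl) measurableSet_Ioi
        (hGint.mono_set Set.Ioc_subset_Ioi_self)
        (hGint.mono_set (Set.Ioi_subset_Ioi zero_le_one)),
      ← intervalIntegral.integral_of_le zero_le_one, e_01, e_Ioi1]
    ring
  have hsplit : (fun t : ℝ => t ^ (-s-1) * (1 - (1+t) ^ (-M)))
      = fun t => G' t + (M/s) * (t ^ (-s) * (1+t) ^ (-(M+1))) := by
    funext t; simp only [hG'def]; ring
  rw [hsplit, integral_add hGint (((integrableOn_h2 hs0 hs1 hM)).const_mul (M/s)), hG'zero,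
    MeasureTheory.integral_const_mul, zero_add]

/-- Interference integral identity (B.6):
`∫₀^∞ (1 − (1 + c v^{−α})^{−M}) · 2v dv = Γ(1 − 2/α) Γ(M + 2/α) / Γ(M) · c^{2/α}`. -/
theorem interference_integral
    (α M c : ℝ) (hα : 2 < α) (hM : 0 < M) (hc : 0 < c) :
    ∫ v in Set.Ioi (0 : ℝ), (1 - (1 + c * v ^ (-α)) ^ (-M)) * (2 * v)
      = (Real.Gamma (1 - 2 / α) * Real.Gamma (M + 2 / α) / Real.Gamma M)
          * c ^ (2 / α) := by
  have hα0 : (0:ℝ) < α := by linarith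
  set s : ℝ := 2 / α with hsdef
  set β : ℝ := α / 2 with hβdef
  have hs0 : 0 < s := by rw [hsdef]; positivity
  have hs1 : s < 1 := by rw [hsdef, div_lt_one hα0]; linarith
  have hβ0 : 0 < β := by rw [hβdef]; linarith
  have hsβ : s * β = 1 := by rw [hsdef, hβdef]; field_simp
  -- Step 1 : v ↦ v²
  have h1 := MeasureTheory.integral_comp_rpow_Ioi
    (fun u : ℝ => 1 - (1 + c * u ^ (-β)) ^ (-M)) (p := 2) two_ne_zero
  have e1 : ∫ v in Set.Ioi (0:ℝ), (1 - (1 + c * v ^ (-α)) ^ (-M)) * (2 * v)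
      = ∫ u in Set.Ioi (0:ℝ), (1 - (1 + c * u ^ (-β)) ^ (-M)) := by
    rw [← h1]
    refine setIntegral_congr_fun measurableSet_Ioi fun x hx => ?_
    simp only [Set.mem_Ioi] at hx
    beta_reduce
    rw [smul_eq_mul, ← Real.rpow_mul hx.le,
      show (2:ℝ) * (-β) = -α by rw [hβdef]; ring]
    rw [show (2:ℝ) - 1 = 1 by norm_num, Real.rpow_one]
    rw [abs_of_pos (by norm_num : (0:ℝ) < 2)]
    ring
  -- Step 2 : scaling u = c^s * w
  have hccs : (0:ℝ) < c ^ s := Real.rpow_pos_of_pos hc s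
  have h2 := MeasureTheory.integral_comp_mul_left_Ioi
    (fun u : ℝ => 1 - (1 + c * u ^ (-β)) ^ (-M)) 0 hccs
  rw [mul_zero] at h2
  have e2 : ∫ u in Set.Ioi (0:ℝ), (1 - (1 + c * u ^ (-β)) ^ (-M))
      = c ^ s * ∫ w in Set.Ioi (0:ℝ), (1 - (1 + w ^ (-β)) ^ (-M)) := by
    have e2' : ∫ x in Set.Ioi (0:ℝ), (1 - (1 + c * (c ^ s * x) ^ (-β)) ^ (-M))
        = ∫ w in Set.Ioi (0:ℝ), (1 - (1 + w ^ (-β)) ^ (-M)) := by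
      refine setIntegral_congr_fun measurableSet_Ioi fun x hx => ?_
      simp only [Set.mem_Ioi] at hx
      beta_reduce
      rw [Real.mul_rpow hccs.le hx.le, ← Real.rpow_mul hc.le,
        show s * (-β) = -1 by linear_combination -hsβ, Real.rpow_neg_one, ← mul_assoc,
        mul_inv_cancel₀ hc.ne', one_mul]
    rw [← e2', h2, smul_eq_mul, ← mul_assoc, mul_inv_cancel₀ hccs.ne', one_mul]
  -- Step 3 : w ↦ w^{-β}
  have h3 := MeasureTheory.integral_comp_rpow_Ioi
    (fun t : ℝ => s * (t ^ (-s-1) * (1 - (1+t) ^ (-M)))) (p := -β) (neg_ne_zero.mpr hβ0.ne')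
  have e3 : ∫ w in Set.Ioi (0:ℝ), (1 - (1 + w ^ (-β)) ^ (-M))
      = s * ∫ t in Set.Ioi (0:ℝ), t ^ (-s-1) * (1 - (1+t) ^ (-M)) := by
    rw [← MeasureTheory.integral_const_mul, ← h3]
    refine setIntegral_congr_fun measurableSet_Ioi fun x hx => ?_
    simp only [Set.mem_Ioi] at hx
    beta_reduce
    rw [smul_eq_mul, abs_neg, abs_of_pos hβ0]
    rw [← Real.rpow_mul hx.le]
    have hx0 : x ^ (-β-1) * x ^ (-β * (-s-1)) = 1 := by
      rw [← Real.rpow_add hx, show -β-1 + -β * (-s-1) = s*β - 1 by ring, hsβ]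
      norm_num
    symm
    calc β * x ^ (-β-1) * (s * (x ^ (-β * (-s-1)) * (1 - (1 + x ^ (-β)) ^ (-M))))
        = (s*β) * (x ^ (-β-1) * x ^ (-β * (-s-1))) * (1 - (1 + x ^ (-β)) ^ (-M)) := by ring
      _ = 1 - (1 + x ^ (-β)) ^ (-M) := by rw [hsβ, hx0]; ring
  -- Step 4 : by parts + beta
  have hK := realBeta_Ioi (1-s) (M+s) (by linarith) (by linarith)
  rw [show (1:ℝ)-s-1 = -s by ring, show (1:ℝ)-s+(M+s) = M+1 by ring] at hK
  have hJ := J_eq hs0 hs1 hM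
  -- assemble
  rw [e1, e2, e3, hJ, hK, Real.Gamma_add_one hM.ne']
  have hΓM : Real.Gamma M ≠ 0 := (Real.Gamma_pos_of_pos hM).ne'
  field_simp
end
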